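/- Define the functional U(h) := inf { Σ_{k=1}^n ∫_{X_k} f_k dμ_k : f ∈ F, f ≥ h } on C_L(μ). Then U is sublinear: it is subadditive (U(h+g) ≤ U(h) + U(g)) and positively homogeneous (U(αh) = αU(h) for α ≥ 0); moreover U(th) ≥ tU(h) for every t ∈ ℝ, and the associated seminorm ‖h‖_D := U(|h|) dominates ‖h‖_L := sup_{π ∈ Π(μ)} ∫|h| dπ, while on C_b(X) it is dominated by the uniform norm: ‖h‖_L ≤ ‖h‖_D, and ‖h‖_D ≤ sup_{x∈X}|h(x)| for h ∈ C_b(X). Furthermore, C_b(X) is dense in C_L(μ) with respect to ‖·‖_D. -/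

import Mathlib

open MeasureTheory Filter Topology

/-- `π` is a transport plan (coupling) with marginals `μ i`. -/
def IsCoupling {n : ℕ} {X : Fin n → Type*} [∀ i, MeasurableSpace (X i)]
    (μ : ∀ i, Measure (X i)) (π : Measure (∀ i, X i)) : Prop :=
  IsProbabilityMeasure π ∧ ∀ i, π.map (fun x => x i) = μ i

/-- `h ∈ C_L(μ)`. -/
def MemCL {n : ℕ} {X : Fin n → Type*} [∀ i, TopologicalSpace (X i)]
    [∀ i, MeasurableSpace (X i)]
    (μ : ∀ i, Measure (X i)) (h : (∀ i, X i) → ℝ) : Prop :=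
  Continuous h ∧ ∃ f : ∀ i, X i → ℝ,
    (∀ i, Continuous (f i) ∧ Integrable (f i) (μ i)) ∧
    ∀ x, |h x| ≤ ∑ i, f i (x i)

/-- The seminorm `‖h‖_L = sup_{π ∈ Π(μ)} ∫ |h| dπ`. -/
noncomputable def normL {n : ℕ} {X : Fin n → Type*} [∀ i, TopologicalSpace (X i)]
    [∀ i, MeasurableSpace (X i)]
    (μ : ∀ i, Measure (X i)) (h : (∀ i, X i) → ℝ) : ℝ :=
  sSup {r : ℝ | ∃ π : Measure (∀ i, X i), IsCoupling μ π ∧ r = ∫ x, |h x| ∂π}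

/-- `U(h) = inf { T(f) = Σ_k ∫ f_k dμ_k : f ∈ F, f ≥ h }`. -/
noncomputable def Ufun {n : ℕ} {X : Fin n → Type*} [∀ i, TopologicalSpace (X i)]
    [∀ i, MeasurableSpace (X i)]
    (μ : ∀ i, Measure (X i)) (h : (∀ i, X i) → ℝ) : ℝ :=
  sInf {r : ℝ | ∃ f : ∀ i, X i → ℝ,
    (∀ i, Continuous (f i) ∧ Integrable (f i) (μ i)) ∧
    (∀ x, h x ≤ ∑ i, f i (x i)) ∧
    r = ∑ i, ∫ t, f i t ∂(μ i)}

/-!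
Every `f ∈ F` satisfies `T(f) = ∫ Σᵢ fᵢ(xᵢ) dπ` for every coupling `π ∈ Π(μ)`; applied to the
product coupling this makes `T` monotone on `F`, so `U` is an infimum bounded below, and it shows
`∫ h dπ ≤ U(h)`, whence `‖h‖_L ≤ ‖h‖_D`. Subadditivity and positive homogeneity follow by adding and
scaling dominating functions, and `U(th) ≥ tU(h)` for `t < 0` from `0 = U(th + (-t)h)`. For the
density, if `|h| ≤ Σᵢ fᵢ` then truncating `h` at height `n k` leaves an error dominated by
`Σᵢ (fᵢ - k)⁺`, whose `T`-value tends to `0` by dominated convergence.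
-/

section F

variable {n : ℕ} {X : Fin n → Type*}

/-- `f ∈ F = ⊕ᵢ C_L(μᵢ)`. -/
def MemF [∀ i, TopologicalSpace (X i)] [∀ i, MeasurableSpace (X i)] (μ : ∀ i, Measure (X i))
    (f : ∀ i, X i → ℝ) : Prop :=
  ∀ i, Continuous (f i) ∧ Integrable (f i) (μ i)

def sumEval (f : ∀ i, X i → ℝ) (x : ∀ i, X i) : ℝ :=
  ∑ i, f i (x i)

/-- The functional `T(f) = Σᵢ ∫ fᵢ dμᵢ`. -/
noncomputable def sumIntegral [∀ i, MeasurableSpace (X i)] (μ : ∀ i, Measure (X i))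
    (f : ∀ i, X i → ℝ) : ℝ :=
  ∑ i, ∫ t, f i t ∂(μ i)

@[simp]
lemma sumEval_add (f g : ∀ i, X i → ℝ) : sumEval (f + g) = sumEval f + sumEval g := by
  ext x; exact Finset.sum_add_distrib

@[simp]
lemma sumEval_smul (c : ℝ) (f : ∀ i, X i → ℝ) : sumEval (c • f) = c • sumEval f := by
  ext x; exact (Finset.mul_sum _ _ _).symm

@[simp]
lemma sumEval_zero : sumEval (0 : ∀ i, X i → ℝ) = 0 := by
  ext x; exact Finset.sum_const_zero

variable [∀ i, MeasurableSpace (X i)] {μ : ∀ i, Measure (X i)} {f g : ∀ i, X i → ℝ}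

@[simp]
lemma sumIntegral_zero : sumIntegral μ (0 : ∀ i, X i → ℝ) = 0 := by
  simp [sumIntegral]

lemma sumIntegral_smul (c : ℝ) (f : ∀ i, X i → ℝ) :
    sumIntegral μ (c • f) = c * sumIntegral μ f := by
  simp only [sumIntegral, Finset.mul_sum]
  exact Finset.sum_congr rfl fun i _ => integral_const_mul c (f i)

variable [∀ i, TopologicalSpace (X i)]

lemma memF_zero : MemF μ 0 :=
  fun _ => ⟨continuous_const, integrable_zero _ _ _⟩

lemma MemF.add (hf : MemF μ f) (hg : MemF μ g) : MemF μ (f + g) :=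
  fun i => ⟨(hf i).1.add (hg i).1, (hf i).2.add (hg i).2⟩

lemma MemF.smul (hf : MemF μ f) (c : ℝ) : MemF μ (c • f) :=
  fun i => ⟨(hf i).1.const_smul c, (hf i).2.smul c⟩

lemma MemF.neg (hf : MemF μ f) : MemF μ (-f) :=
  fun i => ⟨(hf i).1.neg, (hf i).2.neg⟩

lemma sumIntegral_add (hf : MemF μ f) (hg : MemF μ g) :
    sumIntegral μ (f + g) = sumIntegral μ f + sumIntegral μ g := by
  simp only [sumIntegral, ← Finset.sum_add_distrib]
  exact Finset.sum_congr rfl fun i _ => integral_add (hf i).2 (hg i).2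

lemma MemCL.smul {h : (∀ i, X i) → ℝ} (hh : MemCL μ h) (c : ℝ) : MemCL μ (c • h) := by
  obtain ⟨hc, f, hf, hhf⟩ := hh
  refine ⟨hc.const_smul c, |c| • f, MemF.smul hf |c|, fun x => ?_⟩
  simpa [sumEval, abs_mul, Finset.mul_sum] using mul_le_mul_of_nonneg_left (hhf x) (abs_nonneg c)

lemma MemCL.abs {h : (∀ i, X i) → ℝ} (hh : MemCL μ h) : MemCL μ (fun x => |h x|) := by
  obtain ⟨hc, f, hf, hhf⟩ := hh
  exact ⟨hc.abs, f, hf, fun x => (abs_abs (h x)).trans_le (hhf x)⟩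

lemma MemCL.exists_le {h : (∀ i, X i) → ℝ} (hh : MemCL μ h) : ∃ f, MemF μ f ∧ h ≤ sumEval f :=
  let ⟨_, f, hf, hhf⟩ := hh
  ⟨f, hf, fun x => (le_abs_self _).trans (hhf x)⟩

lemma MemCL.exists_ge {h : (∀ i, X i) → ℝ} (hh : MemCL μ h) : ∃ g, MemF μ g ∧ sumEval g ≤ h :=
  let ⟨_, f, hf, hhf⟩ := hh
  ⟨-f, MemF.neg hf, fun x => by simpa [sumEval] using neg_le_of_abs_le (hhf x)⟩

end F

section Coupling

variable {n : ℕ} {X : Fin n → Type*} [∀ i, MeasurableSpace (X i)] {μ : ∀ i, Measure (X i)}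

lemma isCoupling_pi [∀ i, IsProbabilityMeasure (μ i)] : IsCoupling μ (Measure.pi μ) :=
  ⟨inferInstance, fun i => by classical simpa using Measure.pi_map_eval μ i⟩

variable [∀ i, TopologicalSpace (X i)] [∀ i, OpensMeasurableSpace (X i)]
  {π : Measure (∀ i, X i)} {f g : ∀ i, X i → ℝ}

lemma IsCoupling.integrable_comp_eval (hπ : IsCoupling μ π) (hf : MemF μ f) (i : Fin n) :
    Integrable (fun x => f i (x i)) π := by
  have hfi : Integrable (f i) (π.map fun x => x i) := (hπ.2 i).symm ▸ (hf i).2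
  exact (integrable_map_measure (hf i).1.aestronglyMeasurable
    (measurable_pi_apply i).aemeasurable).1 hfi

lemma IsCoupling.integrable_sumEval (hπ : IsCoupling μ π) (hf : MemF μ f) :
    Integrable (sumEval f) π :=
  integrable_finsetSum _ fun i _ => hπ.integrable_comp_eval hf i

lemma IsCoupling.integral_sumEval (hπ : IsCoupling μ π) (hf : MemF μ f) :
    ∫ x, sumEval f x ∂π = sumIntegral μ f := by
  simp only [sumEval, sumIntegral]
  rw [integral_finsetSum _ fun i _ => hπ.integrable_comp_eval hf i]
  refine Finset.sum_congr rfl fun i _ => ?_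
  rw [← hπ.2 i, integral_map (measurable_pi_apply i).aemeasurable (hf i).1.aestronglyMeasurable]

lemma sumIntegral_mono [∀ i, IsProbabilityMeasure (μ i)] (hf : MemF μ f) (hg : MemF μ g)
    (hfg : sumEval f ≤ sumEval g) : sumIntegral μ f ≤ sumIntegral μ g := by
  rw [← isCoupling_pi.integral_sumEval hf, ← isCoupling_pi.integral_sumEval hg]
  exact integral_mono (isCoupling_pi.integrable_sumEval hf)
    (isCoupling_pi.integrable_sumEval hg) hfg

lemma MemCL.integrable [∀ i, SecondCountableTopology (X i)] {h : (∀ i, X i) → ℝ}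
    (hh : MemCL μ h) (hπ : IsCoupling μ π) : Integrable h π := by
  obtain ⟨hc, f, hf, hhf⟩ := hh
  exact (hπ.integrable_sumEval hf).mono' hc.aestronglyMeasurable
    (Eventually.of_forall fun x => (Real.norm_eq_abs _).trans_le (hhf x))

end Coupling

section Ufun

variable {n : ℕ} {X : Fin n → Type*} [∀ i, TopologicalSpace (X i)] [∀ i, MeasurableSpace (X i)]
  {μ : ∀ i, Measure (X i)} {h g : (∀ i, X i) → ℝ} {f f' : ∀ i, X i → ℝ}

lemma Ufun_eq_sInf :
    Ufun μ h = sInf {r | ∃ f, MemF μ f ∧ h ≤ sumEval f ∧ r = sumIntegral μ f} := rfl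

lemma le_Ufun {c : ℝ} (hne : ∃ f, MemF μ f ∧ h ≤ sumEval f)
    (H : ∀ f, MemF μ f → h ≤ sumEval f → c ≤ sumIntegral μ f) : c ≤ Ufun μ h := by
  obtain ⟨f, hf, hhf⟩ := hne
  refine le_csInf ⟨_, f, hf, hhf, rfl⟩ ?_
  rintro _ ⟨f', hf', hhf', rfl⟩
  exact H f' hf' hhf'

variable [∀ i, OpensMeasurableSpace (X i)]

lemma integral_le_Ufun [∀ i, SecondCountableTopology (X i)] {π : Measure (∀ i, X i)}
    (hh : MemCL μ h) (hπ : IsCoupling μ π) : ∫ x, h x ∂π ≤ Ufun μ h :=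
  le_Ufun hh.exists_le fun _ hf hhf => hπ.integral_sumEval hf ▸
    integral_mono (hh.integrable hπ) (hπ.integrable_sumEval hf) hhf

variable [∀ i, IsProbabilityMeasure (μ i)]

lemma Ufun_le (hf' : MemF μ f') (hf'h : sumEval f' ≤ h) (hf : MemF μ f) (hhf : h ≤ sumEval f) :
    Ufun μ h ≤ sumIntegral μ f := by
  refine csInf_le ⟨sumIntegral μ f', ?_⟩ ⟨f, hf, hhf, rfl⟩
  rintro _ ⟨f'', hf'', hhf'', rfl⟩
  exact sumIntegral_mono hf' hf'' (hf'h.trans hhf'')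

lemma Ufun_nonneg (h0 : 0 ≤ h) (hne : ∃ f, MemF μ f ∧ h ≤ sumEval f) : 0 ≤ Ufun μ h :=
  le_Ufun hne fun f hf hhf => by
    simpa using sumIntegral_mono memF_zero hf (by simpa using h0.trans hhf)

lemma Ufun_zero : Ufun μ (0 : (∀ i, X i) → ℝ) = 0 :=
  le_antisymm (by simpa using Ufun_le memF_zero sumEval_zero.le memF_zero sumEval_zero.ge)
    (Ufun_nonneg le_rfl ⟨0, memF_zero, sumEval_zero.ge⟩)

lemma Ufun_add_le (hh : MemCL μ h) (hg : MemCL μ g) :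
    Ufun μ (h + g) ≤ Ufun μ h + Ufun μ g := by
  have key : ∀ f, MemF μ f → h ≤ sumEval f → ∀ f', MemF μ f' → g ≤ sumEval f' →
      Ufun μ (h + g) ≤ sumIntegral μ f + sumIntegral μ f' := by
    intro f hf hhf f' hf' hgf'
    obtain ⟨l, hl, hlh⟩ := hh.exists_ge
    obtain ⟨l', hl', hl'g⟩ := hg.exists_ge
    rw [← sumIntegral_add hf hf']
    exact Ufun_le (hl.add hl') (by simpa using add_le_add hlh hl'g) (hf.add hf')
      (by simpa using add_le_add hhf hgf')
  suffices Ufun μ (h + g) - Ufun μ g ≤ Ufun μ h by linarith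
  refine le_Ufun hh.exists_le fun f hf hhf => ?_
  rw [sub_le_comm]
  refine le_Ufun hg.exists_le fun f' hf' hgf' => ?_
  linarith [key f hf hhf f' hf' hgf']

lemma Ufun_smul_le (hh : MemCL μ h) {α : ℝ} (hα : 0 < α) :
    Ufun μ (α • h) ≤ α * Ufun μ h := by
  rw [← div_le_iff₀' hα]
  refine le_Ufun hh.exists_le fun f hf hhf => ?_
  obtain ⟨l, hl, hlh⟩ := hh.exists_ge
  rw [div_le_iff₀' hα, ← sumIntegral_smul]
  exact Ufun_le (hl.smul α) (by simpa using smul_le_smul_of_nonneg_left hlh hα.le) (hf.smul α)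
    (by simpa using smul_le_smul_of_nonneg_left hhf hα.le)

lemma Ufun_smul (hh : MemCL μ h) {α : ℝ} (hα : 0 ≤ α) : Ufun μ (α • h) = α * Ufun μ h := by
  rcases hα.eq_or_lt with rfl | hα
  · simp [Ufun_zero]
  refine le_antisymm (Ufun_smul_le hh hα) ?_
  have := Ufun_smul_le (hh.smul α) (inv_pos.2 hα)
  rw [smul_smul, inv_mul_cancel₀ hα.ne', one_smul] at this
  rwa [le_inv_mul_iff₀ hα] at this

lemma mul_Ufun_le_Ufun_smul (hh : MemCL μ h) (t : ℝ) : t * Ufun μ h ≤ Ufun μ (t • h) := by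
  rcases le_or_gt 0 t with ht | ht
  · exact (Ufun_smul hh ht).ge
  have := Ufun_add_le (hh.smul t) (hh.smul (-t))
  rw [← add_smul, add_neg_cancel, zero_smul, Ufun_zero, Ufun_smul hh (neg_nonneg.2 ht.le)] at this
  linarith

lemma normL_le_Ufun_abs [∀ i, SecondCountableTopology (X i)] (hh : MemCL μ h) :
    normL μ h ≤ Ufun μ (fun x => |h x|) :=
  Real.sSup_le (by rintro _ ⟨π, hπ, rfl⟩; exact integral_le_Ufun hh.abs hπ)
    ((integral_nonneg fun x => abs_nonneg (h x)).trans (integral_le_Ufun hh.abs isCoupling_pi))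

end Ufun

/-- With no factors `T ≡ 0`, so the defining set is `∅` or `{0}`; both have infimum `0`,
the first as the junk value of `sInf ∅`. -/
lemma Ufun_eq_zero_of_fin_zero {X : Fin 0 → Type*} [∀ i, TopologicalSpace (X i)]
    [∀ i, MeasurableSpace (X i)] (μ : ∀ i, Measure (X i)) (h : (∀ i, X i) → ℝ) :
    Ufun μ h = 0 := by
  have hS : {r | ∃ f, MemF μ f ∧ h ≤ sumEval f ∧ r = sumIntegral μ f} ⊆ {0} := by
    rintro _ ⟨f, -, -, rfl⟩
    simp [sumIntegral]
  rw [Ufun_eq_sInf]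
  rcases Set.subset_singleton_iff_eq.1 hS with hS | hS <;> rw [hS] <;> simp

lemma Ufun_le_of_le_const {n : ℕ} {X : Fin n → Type*} [∀ i, TopologicalSpace (X i)]
    [∀ i, MeasurableSpace (X i)] [∀ i, OpensMeasurableSpace (X i)]
    {μ : ∀ i, Measure (X i)} [∀ i, IsProbabilityMeasure (μ i)] {h : (∀ i, X i) → ℝ} {C : ℝ}
    (h0 : 0 ≤ h) (hC : ∀ x, h x ≤ C) (hC0 : 0 ≤ C) : Ufun μ h ≤ C := by
  cases n with
  | zero => exact (Ufun_eq_zero_of_fin_zero μ h).trans_le hC0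
  | succ n =>
    let f : ∀ i, X i → ℝ := fun i _ => if i = 0 then C else 0
    have hf : MemF μ f := fun i => ⟨continuous_const, integrable_const _⟩
    calc Ufun μ h ≤ sumIntegral μ f :=
          Ufun_le memF_zero (by simpa using h0) hf fun x => by simpa [f, sumEval] using hC x
      _ = C := by simp [f, sumIntegral]

lemma MeasureTheory.Integrable.tendsto_integral_max_sub_natCast {α : Type*} [MeasurableSpace α]
    {ν : Measure α} {φ : α → ℝ} (hφ : Integrable φ ν) :
    Tendsto (fun k : ℕ => ∫ t, max (φ t - k) 0 ∂ν) atTop (𝓝 0) := by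
  have hbound : ∀ k : ℕ, ∀ t, ‖max (φ t - k) 0‖ ≤ |φ t| := fun k t => by
    rw [Real.norm_of_nonneg (le_max_right _ _)]
    exact max_le (by linarith [le_abs_self (φ t), (Nat.cast_nonneg k : (0 : ℝ) ≤ k)])
      (abs_nonneg _)
  have hlim : ∀ t, Tendsto (fun k : ℕ => max (φ t - k) 0) atTop (𝓝 0) := fun t =>
    tendsto_const_nhds.congr' <| (eventually_ge_atTop ⌈φ t⌉₊).mono fun k hk =>
      (max_eq_right (sub_nonpos.2 ((Nat.le_ceil _).trans (by exact_mod_cast hk)))).symm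
  simpa using tendsto_integral_of_dominated_convergence _
    (fun k => (hφ.1.sub aestronglyMeasurable_const).sup aestronglyMeasurable_const) hφ.abs
    (fun k => Eventually.of_forall (hbound k)) (Eventually.of_forall hlim)

lemma abs_sub_max_min_le (a M : ℝ) : |a - max (-M) (min M a)| ≤ max (|a| - M) 0 := by
  grind

lemma MemCL.exists_bounded_Ufun_abs_sub_lt {n : ℕ} {X : Fin n → Type*}
    [∀ i, TopologicalSpace (X i)] [∀ i, MeasurableSpace (X i)] [∀ i, OpensMeasurableSpace (X i)]
    {μ : ∀ i, Measure (X i)} [∀ i, IsProbabilityMeasure (μ i)] {h : (∀ i, X i) → ℝ}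
    (hh : MemCL μ h) {ε : ℝ} (hε : 0 < ε) :
    ∃ g : (∀ i, X i) → ℝ, Continuous g ∧ (∃ C : ℝ, ∀ x, |g x| ≤ C) ∧
      Ufun μ (fun x => |h x - g x|) < ε := by
  obtain ⟨hc, f, hf, hhf⟩ := hh
  let fk : ℕ → ∀ i, X i → ℝ := fun k i t => max (f i t - k) 0
  have hfk : ∀ k, MemF μ (fk k) := fun k i =>
    ⟨((hf i).1.sub continuous_const).max continuous_const,
      ((hf i).2.sub (integrable_const _)).pos_part⟩
  have htend : Tendsto (fun k => sumIntegral μ (fk k)) atTop (𝓝 0) := by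
    simpa [sumIntegral, fk] using
      tendsto_finsetSum Finset.univ fun i _ => (hf i).2.tendsto_integral_max_sub_natCast
  obtain ⟨k, hk⟩ := (htend.eventually_lt_const hε).exists
  -- truncate `h` at the level `M = n k`, where `sumEval (fk k) ≥ |h| - M`
  set M : ℝ := n * k
  have hM : 0 ≤ M := by positivity
  refine ⟨fun x => max (-M) (min M (h x)), by fun_prop,
    ⟨M, fun x => abs_le.2 ⟨le_max_left _ _, max_le (by linarith) (min_le_left _ _)⟩⟩, ?_⟩
  refine (Ufun_le memF_zero (fun x => by simp) (hfk k) fun x => ?_).trans_lt hk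
  refine (abs_sub_max_min_le _ _).trans (max_le ?_ (Finset.sum_nonneg fun i _ => le_max_right _ _))
  calc |h x| - M ≤ ∑ i, (f i (x i) - k) := by
        simp only [Finset.sum_sub_distrib, Finset.sum_const, Finset.card_univ, Fintype.card_fin,
          nsmul_eq_mul, M]
        linarith [hhf x]
    _ ≤ sumEval (fk k) x := Finset.sum_le_sum fun i _ => le_max_left _ _

/-- `U` is sublinear (subadditive and positively homogeneous), satisfies
`U(t h) ≥ t U(h)` for all `t ∈ ℝ`, the seminorm `‖h‖_D = U(|h|)` dominates `‖h‖_L` and is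
dominated by the sup norm on `C_b(X)`, and `C_b(X)` is `‖·‖_D`-dense in `C_L(μ)`. -/
theorem Ufun_properties {n : ℕ} {X : Fin n → Type*}
    [∀ i, TopologicalSpace (X i)] [∀ i, PolishSpace (X i)]
    [∀ i, MeasurableSpace (X i)] [∀ i, BorelSpace (X i)]
    (μ : ∀ i, Measure (X i)) [∀ i, IsProbabilityMeasure (μ i)] :
    (∀ h g : (∀ i, X i) → ℝ, MemCL μ h → MemCL μ g →
      Ufun μ (h + g) ≤ Ufun μ h + Ufun μ g) ∧
    (∀ h : (∀ i, X i) → ℝ, MemCL μ h → ∀ α : ℝ, 0 ≤ α →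
      Ufun μ (α • h) = α * Ufun μ h) ∧
    (∀ h : (∀ i, X i) → ℝ, MemCL μ h → ∀ t : ℝ,
      t * Ufun μ h ≤ Ufun μ (t • h)) ∧
    (∀ h : (∀ i, X i) → ℝ, MemCL μ h →
      normL μ h ≤ Ufun μ (fun x => |h x|)) ∧
    (∀ h : (∀ i, X i) → ℝ, Continuous h → ∀ C : ℝ, (∀ x, |h x| ≤ C) →
      Ufun μ (fun x => |h x|) ≤ C) ∧
    (∀ h : (∀ i, X i) → ℝ, MemCL μ h → ∀ ε > (0 : ℝ),
      ∃ g : (∀ i, X i) → ℝ, Continuous g ∧ (∃ C : ℝ, ∀ x, |g x| ≤ C) ∧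
        Ufun μ (fun x => |h x - g x|) < ε) := by
  have : ∀ i, Nonempty (X i) := fun i => nonempty_of_isProbabilityMeasure (μ i)
  refine ⟨fun h g hh hg => Ufun_add_le hh hg, fun h hh α hα => Ufun_smul hh hα,
    fun h hh t => mul_Ufun_le_Ufun_smul hh t, fun h hh => normL_le_Ufun_abs hh,
    fun h _ C hC => ?_, fun h hh ε hε => hh.exists_bounded_Ufun_abs_sub_lt hε⟩
  exact Ufun_le_of_le_const (fun x => abs_nonneg (h x)) hC
    ((abs_nonneg _).trans (hC (Classical.arbitrary _)))
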